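/- Let 0<β<1, let φ be integrable on (0,∞) and let ξ be measurable on (0,∞) with ‖ξ‖_{L_1^{0,β}} = ∫₀^∞ |ξ(v)| K₀(βv) dv < ∞. Define f = (φ ∗_{F_s,F_c} √(π/2)·e^{−·}) ⋆ ξ. Then f is integrable on (0,∞) and ‖f‖_{L_1(0,∞)} ≤ 4·‖φ‖_{L_1(0,∞)}·‖ξ‖_{L_1^{0,β}}. -/

import Mathlib

open MeasureTheory Real Set

/-- The kernel function φ(x,u,v). -/
noncomputable def phiKer (x u v : ℝ) : ℝ :=
  Real.exp (-v * Real.cosh (x + u - 1)) + Real.exp (-v * Real.cosh (x - u + 1))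
    - Real.exp (-v * Real.cosh (x + u + 1)) - Real.exp (-v * Real.cosh (x - u - 1))

/-- The modified Bessel function of the second kind of order zero. -/
noncomputable def K0 (v : ℝ) : ℝ := ∫ t in Set.Ioi (0 : ℝ), Real.exp (-v * Real.cosh t)

/-- The trigonometric-weighted generalized convolution (f ⋆ g). -/
noncomputable def gconv (f g : ℝ → ℝ) (x : ℝ) : ℝ :=
  (1 / 4) * ∫ v in Set.Ioi (0 : ℝ), ∫ u in Set.Ioi (0 : ℝ), phiKer x u v * f u * g v

/-- Fourier cosine transform. -/
noncomputable def Fc (f : ℝ → ℝ) (y : ℝ) : ℝ :=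
  Real.sqrt (2 / Real.pi) * ∫ x in Set.Ioi (0 : ℝ), f x * Real.cos (x * y)

/-- Fourier sine transform. -/
noncomputable def Fs (f : ℝ → ℝ) (y : ℝ) : ℝ :=
  Real.sqrt (2 / Real.pi) * ∫ x in Set.Ioi (0 : ℝ), f x * Real.sin (x * y)

/-- Modified Bessel function K_{iy}(x). -/
noncomputable def Kiy (y x : ℝ) : ℝ :=
  ∫ u in Set.Ioi (0 : ℝ), Real.exp (-x * Real.cosh u) * Real.cos (y * u)

/-- Kontorovich–Lebedev transform. -/
noncomputable def KL (g : ℝ → ℝ) (y : ℝ) : ℝ := ∫ x in Set.Ioi (0 : ℝ), Kiy y x * g x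

/-- Fourier cosine convolution. -/
noncomputable def fcConv (f g : ℝ → ℝ) (x : ℝ) : ℝ :=
  (1 / Real.sqrt (2 * Real.pi)) * ∫ u in Set.Ioi (0 : ℝ), f u * (g |x - u| + g (x + u))

/-- Fourier sine–cosine generalized convolution. -/
noncomputable def fscConv (f g : ℝ → ℝ) (x : ℝ) : ℝ :=
  (1 / Real.sqrt (2 * Real.pi)) * ∫ u in Set.Ioi (0 : ℝ), f u * (g |x - u| - g (x + u))

/-!
Both convolutions are integral operators, so by Tonelli the L¹ norm of the output is bounded by
integrating the absolute value of the kernel in `x` first. For `∗_{F_s,F_c}` with `√(π/2) e^{-t}`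
the kernel is `½ (e^{-|x-u|} - e^{-(x+u)})`, which lies between `0` and `½ e^{-|x-u|}` for
`x, u > 0`; its `x`-integral is at most `1`, so `‖g‖₁ ≤ ‖Φ‖₁`. Each of the four exponentials in
`φ(·,u,v)` is a translate of the even function `e^{-v cosh t}`, whence
`∫₀^∞ |φ(x,u,v)| dx ≤ 8 K₀(v)` and `‖g ⋆ ξ‖₁ ≤ 2 ‖g‖₁ ∫₀^∞ |ξ(v)| K₀(v) dv`.
Finally `K₀(v) ≤ K₀(βv)` since `K₀` decreases.
-/

open scoped ENNReal

theorem lintegral_enorm_integral_le_lintegral_lintegral_enorm {α β E : Type*}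
    [MeasurableSpace α] [MeasurableSpace β] [NormedAddCommGroup E] [NormedSpace ℝ E]
    {μ : Measure α} {ν : Measure β} [SFinite μ] [SFinite ν] {k : α → β → E}
    (hk : AEStronglyMeasurable (Function.uncurry k) (μ.prod ν)) :
    ∫⁻ x, ‖∫ y, k x y ∂ν‖ₑ ∂μ ≤ ∫⁻ y, ∫⁻ x, ‖k x y‖ₑ ∂μ ∂ν :=
  calc ∫⁻ x, ‖∫ y, k x y ∂ν‖ₑ ∂μ ≤ ∫⁻ x, ∫⁻ y, ‖k x y‖ₑ ∂ν ∂μ :=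
        lintegral_mono fun _ => enorm_integral_le_lintegral_enorm _
    _ = ∫⁻ y, ∫⁻ x, ‖k x y‖ₑ ∂μ ∂ν := lintegral_lintegral_swap hk.enorm

theorem lintegral_eq_two_mul_setLIntegral_Ioi_of_even {F : ℝ → ℝ≥0∞} (hF : ∀ t, F (-t) = F t) :
    ∫⁻ x, F x = 2 * ∫⁻ x in Ioi 0, F x := by
  have hIio : ∫⁻ x in Iio 0, F x = ∫⁻ x in Ioi 0, F x := by
    rw [← lintegral_indicator measurableSet_Iio, ← lintegral_indicator measurableSet_Ioi,
      ← lintegral_neg_eq_self]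
    congr 1 with x
    simp [indicator, hF]
  rw [← lintegral_add_compl F measurableSet_Iio, compl_Iio, hIio,
    setLIntegral_congr Ioi_ae_eq_Ici.symm, two_mul]

theorem setLIntegral_Ioi_comp_add_le_of_even {F : ℝ → ℝ≥0∞} (hF : ∀ t, F (-t) = F t) (c : ℝ) :
    ∫⁻ x in Ioi 0, F (x + c) ≤ 2 * ∫⁻ x in Ioi 0, F x :=
  calc ∫⁻ x in Ioi 0, F (x + c) ≤ ∫⁻ x, F (x + c) := setLIntegral_le_lintegral _ _
    _ = ∫⁻ x, F x := lintegral_add_right_eq_self F c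
    _ = 2 * ∫⁻ x in Ioi 0, F x := lintegral_eq_two_mul_setLIntegral_Ioi_of_even hF

theorem setLIntegral_exp_neg_abs_sub_le (u : ℝ) :
    ∫⁻ x in Ioi 0, ENNReal.ofReal (exp (-|x - u|)) ≤ 2 := by
  have hexp : ∫⁻ x in Ioi 0, ENNReal.ofReal (exp (-|x|)) = 1 := by
    rw [setLIntegral_congr_fun measurableSet_Ioi fun x (hx : 0 < x) => by rw [abs_of_pos hx],
      ← ofReal_integral_eq_lintegral_ofReal
        (by simpa [IntegrableOn] using exp_neg_integrableOn_Ioi 0 one_pos)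
        (ae_of_all _ fun _ => (exp_pos _).le), integral_exp_neg_Ioi_zero, ENNReal.ofReal_one]
  simpa [sub_eq_add_neg, hexp] using
    setLIntegral_Ioi_comp_add_le_of_even (F := fun t => ENNReal.ofReal (exp (-|t|)))
      (fun t => by rw [abs_neg]) (-u)

theorem integrableOn_exp_neg_mul_cosh {v : ℝ} (hv : 0 < v) :
    IntegrableOn (fun t => exp (-v * cosh t)) (Ioi 0) := by
  refine (exp_neg_integrableOn_Ioi 0 hv).mono' (by fun_prop) ?_
  filter_upwards [ae_restrict_mem measurableSet_Ioi] with t (ht : 0 < t)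
  rw [norm_of_nonneg (exp_pos _).le, exp_le_exp]
  have : t ≤ cosh t := (self_le_sinh_iff.2 ht.le).trans (sinh_lt_cosh t).le
  nlinarith

theorem K0_nonneg (v : ℝ) : 0 ≤ K0 v :=
  setIntegral_nonneg measurableSet_Ioi fun _ _ => (exp_pos _).le

theorem K0_antitoneOn : AntitoneOn K0 (Ioi 0) := fun a ha b hb hab =>
  setIntegral_mono_on (integrableOn_exp_neg_mul_cosh hb) (integrableOn_exp_neg_mul_cosh ha)
    measurableSet_Ioi fun t _ => exp_le_exp.2 (by nlinarith [one_le_cosh t])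

theorem measurable_K0 : Measurable K0 :=
  (StronglyMeasurable.integral_prod_right' (ν := volume.restrict (Ioi 0))
    (f := fun p : ℝ × ℝ => exp (-p.1 * cosh p.2)) (by fun_prop)).measurable

theorem setLIntegral_exp_neg_mul_cosh_add_le {v : ℝ} (hv : 0 < v) (c : ℝ) :
    ∫⁻ x in Ioi 0, ENNReal.ofReal (exp (-v * cosh (x + c))) ≤ 2 * ENNReal.ofReal (K0 v) := by
  rw [K0, ofReal_integral_eq_lintegral_ofReal (integrableOn_exp_neg_mul_cosh hv)
    (ae_of_all _ fun _ => (exp_pos _).le)]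
  exact setLIntegral_Ioi_comp_add_le_of_even (F := fun t => ENNReal.ofReal (exp (-v * cosh t)))
    (fun t => by rw [cosh_neg]) c

theorem abs_phiKer_le (x u v : ℝ) :
    |phiKer x u v| ≤ ∑ i, exp (-v * cosh (x + ![u - 1, 1 - u, u + 1, -u - 1] i)) := by
  rw [Fin.sum_univ_four]
  show _ ≤ exp (-v * cosh (x + (u - 1))) + exp (-v * cosh (x + (1 - u)))
    + exp (-v * cosh (x + (u + 1))) + exp (-v * cosh (x + (-u - 1)))
  rw [show x + (u - 1) = x + u - 1 by ring, show x + (1 - u) = x - u + 1 by ring,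
    show x + (u + 1) = x + u + 1 by ring, show x + (-u - 1) = x - u - 1 by ring, phiKer, abs_le]
  constructor <;> linarith [exp_pos (-v * cosh (x + u - 1)), exp_pos (-v * cosh (x - u + 1)),
    exp_pos (-v * cosh (x + u + 1)), exp_pos (-v * cosh (x - u - 1))]

theorem setLIntegral_enorm_phiKer_le {v : ℝ} (hv : 0 < v) (u : ℝ) :
    ∫⁻ x in Ioi 0, ‖phiKer x u v‖ₑ ≤ 8 * ENNReal.ofReal (K0 v) := by
  set c : Fin 4 → ℝ := ![u - 1, 1 - u, u + 1, -u - 1]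
  calc ∫⁻ x in Ioi 0, ‖phiKer x u v‖ₑ
      ≤ ∫⁻ x in Ioi 0, ∑ i, ENNReal.ofReal (exp (-v * cosh (x + c i))) := by
        refine lintegral_mono fun x => ?_
        rw [Real.enorm_eq_ofReal_abs, ← ENNReal.ofReal_sum_of_nonneg fun _ _ => (exp_pos _).le]
        exact ENNReal.ofReal_le_ofReal (abs_phiKer_le x u v)
    _ = ∑ i, ∫⁻ x in Ioi 0, ENNReal.ofReal (exp (-v * cosh (x + c i))) :=
        lintegral_finsetSum _ fun i _ => by fun_prop
    _ ≤ ∑ _i : Fin 4, 2 * ENNReal.ofReal (K0 v) :=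
        Finset.sum_le_sum fun i _ => setLIntegral_exp_neg_mul_cosh_add_le hv (c i)
    _ = 8 * ENNReal.ofReal (K0 v) := by
        rw [Finset.sum_const, Finset.card_univ, Fintype.card_fin, nsmul_eq_mul, ← mul_assoc]
        norm_num

theorem fscConv_sqrt_pi_div_two_mul_exp_neg (Φ : ℝ → ℝ) (x : ℝ) :
    fscConv Φ (fun t => √(π / 2) * exp (-t)) x =
      2⁻¹ * ∫ u in Ioi 0, Φ u * (exp (-|x - u|) - exp (-(x + u))) := by
  have hconst : 1 / √(2 * π) * √(π / 2) = 2⁻¹ := by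
    rw [one_div_mul_eq_div, ← sqrt_div' _ (by positivity),
      show π / 2 / (2 * π) = 2⁻¹ ^ 2 by field_simp, sqrt_sq (by norm_num)]
  simp_rw [fscConv, ← mul_sub, mul_left_comm (Φ _), integral_const_mul, ← mul_assoc, hconst]

theorem aestronglyMeasurable_mul_exp_neg_abs_sub_sub_exp_neg_add {Φ : ℝ → ℝ}
    (hΦ : AEStronglyMeasurable Φ (volume.restrict (Ioi 0))) (μ : Measure ℝ) :
    AEStronglyMeasurable (fun p : ℝ × ℝ => Φ p.2 * (exp (-|p.1 - p.2|) - exp (-(p.1 + p.2))))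
      (μ.prod (volume.restrict (Ioi 0))) :=
  hΦ.comp_snd.mul (Measurable.aestronglyMeasurable (by fun_prop))

theorem aestronglyMeasurable_fscConv_sqrt_pi_div_two_mul_exp_neg {Φ : ℝ → ℝ}
    (hΦ : AEStronglyMeasurable Φ (volume.restrict (Ioi 0))) (μ : Measure ℝ) [SFinite μ] :
    AEStronglyMeasurable (fscConv Φ (fun t => √(π / 2) * exp (-t))) μ := by
  simp_rw [funext (fscConv_sqrt_pi_div_two_mul_exp_neg Φ)]
  exact aestronglyMeasurable_const.mul
    (aestronglyMeasurable_mul_exp_neg_abs_sub_sub_exp_neg_add hΦ μ).integral_prod_right'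

theorem setLIntegral_enorm_fscConv_sqrt_pi_div_two_mul_exp_neg_le {Φ : ℝ → ℝ}
    (hΦ : AEStronglyMeasurable Φ (volume.restrict (Ioi 0))) :
    ∫⁻ x in Ioi 0, ‖fscConv Φ (fun t => √(π / 2) * exp (-t)) x‖ₑ ≤ ∫⁻ u in Ioi 0, ‖Φ u‖ₑ := by
  have hkernel : ∀ u ∈ Ioi (0 : ℝ),
      ∫⁻ x in Ioi 0, ‖Φ u * (exp (-|x - u|) - exp (-(x + u)))‖ₑ ≤ ‖Φ u‖ₑ * 2 := by
    intro u (hu : 0 < u)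
    simp_rw [enorm_mul]
    rw [lintegral_const_mul' _ _ enorm_ne_top]
    gcongr
    refine (setLIntegral_mono' measurableSet_Ioi fun x (hx : 0 < x) => ?_).trans
      (setLIntegral_exp_neg_abs_sub_le u)
    rw [Real.enorm_eq_ofReal_abs]
    refine ENNReal.ofReal_le_ofReal ?_
    have : exp (-(x + u)) ≤ exp (-|x - u|) :=
      exp_le_exp.2 (neg_le_neg (abs_le.2 ⟨by linarith, by linarith⟩))
    rw [abs_of_nonneg (sub_nonneg.2 this)]
    linarith [exp_pos (-(x + u))]
  rw [← lintegral_congr fun x => congrArg enorm (fscConv_sqrt_pi_div_two_mul_exp_neg Φ x).symm]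
  simp_rw [enorm_mul]
  rw [lintegral_const_mul' _ _ enorm_ne_top]
  calc ‖(2 : ℝ)⁻¹‖ₑ * ∫⁻ x in Ioi 0, ‖∫ u in Ioi 0, Φ u * (exp (-|x - u|) - exp (-(x + u)))‖ₑ
      ≤ ‖(2 : ℝ)⁻¹‖ₑ *
          ∫⁻ u in Ioi 0, ∫⁻ x in Ioi 0, ‖Φ u * (exp (-|x - u|) - exp (-(x + u)))‖ₑ := by
        gcongr ‖(2 : ℝ)⁻¹‖ₑ * ?_
        exact lintegral_enorm_integral_le_lintegral_lintegral_enorm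
          (k := fun x u => Φ u * (exp (-|x - u|) - exp (-(x + u))))
          (aestronglyMeasurable_mul_exp_neg_abs_sub_sub_exp_neg_add hΦ (volume.restrict (Ioi 0)))
    _ ≤ ‖(2 : ℝ)⁻¹‖ₑ * ∫⁻ u in Ioi 0, ‖Φ u‖ₑ * 2 := by
        gcongr ‖(2 : ℝ)⁻¹‖ₑ * ?_
        exact setLIntegral_mono' measurableSet_Ioi hkernel
    _ = ∫⁻ u in Ioi 0, ‖Φ u‖ₑ := by
        have h2 : ‖(2 : ℝ)⁻¹‖ₑ = 2⁻¹ := by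
          rw [enorm_inv two_ne_zero, Real.enorm_eq_ofReal_abs]; simp
        rw [lintegral_mul_const' _ _ ENNReal.ofNat_ne_top, h2, mul_comm, mul_assoc,
          ENNReal.mul_inv_cancel two_ne_zero ENNReal.ofNat_ne_top, mul_one]

theorem aestronglyMeasurable_gconv_integrand {f g : ℝ → ℝ}
    (hf : AEStronglyMeasurable f (volume.restrict (Ioi 0)))
    (hg : AEStronglyMeasurable g (volume.restrict (Ioi 0))) (μ : Measure ℝ) [SFinite μ] :
    AEStronglyMeasurable (fun q : (ℝ × ℝ) × ℝ => phiKer q.1.1 q.2 q.1.2 * f q.2 * g q.1.2)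
      ((μ.prod (volume.restrict (Ioi 0))).prod (volume.restrict (Ioi 0))) :=
  ((Measurable.aestronglyMeasurable (by unfold phiKer; fun_prop)).mul hf.comp_snd).mul
    hg.comp_snd.comp_fst

theorem aestronglyMeasurable_gconv {f g : ℝ → ℝ}
    (hf : AEStronglyMeasurable f (volume.restrict (Ioi 0)))
    (hg : AEStronglyMeasurable g (volume.restrict (Ioi 0))) (μ : Measure ℝ) [SFinite μ] :
    AEStronglyMeasurable (gconv f g) μ :=
  aestronglyMeasurable_const.mul
    (aestronglyMeasurable_gconv_integrand hf hg μ).integral_prod_right'.integral_prod_right'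

theorem setLIntegral_setLIntegral_enorm_phiKer_mul_mul_le {f g : ℝ → ℝ} {v : ℝ} (hv : 0 < v) :
    ∫⁻ u in Ioi 0, ∫⁻ x in Ioi 0, ‖phiKer x u v * f u * g v‖ₑ ≤
      8 * (∫⁻ u in Ioi 0, ‖f u‖ₑ) * (‖g v‖ₑ * ENNReal.ofReal (K0 v)) :=
  calc ∫⁻ u in Ioi 0, ∫⁻ x in Ioi 0, ‖phiKer x u v * f u * g v‖ₑ
      = ∫⁻ u in Ioi 0, (∫⁻ x in Ioi 0, ‖phiKer x u v‖ₑ) * (‖f u‖ₑ * ‖g v‖ₑ) := by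
        refine lintegral_congr fun u => ?_
        simp_rw [enorm_mul, mul_assoc]
        exact lintegral_mul_const' _ _ (ENNReal.mul_ne_top enorm_ne_top enorm_ne_top)
    _ ≤ ∫⁻ u in Ioi 0, 8 * ENNReal.ofReal (K0 v) * (‖f u‖ₑ * ‖g v‖ₑ) := by
        gcongr with u
        exact setLIntegral_enorm_phiKer_le hv u
    _ = ∫⁻ u in Ioi 0, ‖f u‖ₑ * (8 * (‖g v‖ₑ * ENNReal.ofReal (K0 v))) :=
        lintegral_congr fun u => by ring
    _ = 8 * (∫⁻ u in Ioi 0, ‖f u‖ₑ) * (‖g v‖ₑ * ENNReal.ofReal (K0 v)) := by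
        rw [lintegral_mul_const' _ _ (by finiteness)]
        ring

theorem setLIntegral_enorm_gconv_le {f g : ℝ → ℝ}
    (hf : AEStronglyMeasurable f (volume.restrict (Ioi 0)))
    (hg : AEStronglyMeasurable g (volume.restrict (Ioi 0))) :
    ∫⁻ x in Ioi 0, ‖gconv f g x‖ₑ ≤
      2 * (∫⁻ u in Ioi 0, ‖f u‖ₑ) * ∫⁻ v in Ioi 0, ‖g v‖ₑ * ENNReal.ofReal (K0 v) := by
  have hquarter : ‖(1 / 4 : ℝ)‖ₑ = 4⁻¹ := by
    rw [one_div, enorm_inv (by norm_num), Real.enorm_eq_ofReal_abs]; simp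
  simp_rw [gconv, enorm_mul]
  rw [lintegral_const_mul' _ _ enorm_ne_top]
  calc ‖(1 / 4 : ℝ)‖ₑ * ∫⁻ x in Ioi 0, ‖∫ v in Ioi 0, ∫ u in Ioi 0, phiKer x u v * f u * g v‖ₑ
      ≤ ‖(1 / 4 : ℝ)‖ₑ *
          ∫⁻ v in Ioi 0, ∫⁻ x in Ioi 0, ‖∫ u in Ioi 0, phiKer x u v * f u * g v‖ₑ := by
        gcongr ‖(1 / 4 : ℝ)‖ₑ * ?_
        exact lintegral_enorm_integral_le_lintegral_lintegral_enorm
          (k := fun x v => ∫ u in Ioi 0, phiKer x u v * f u * g v)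
          (aestronglyMeasurable_gconv_integrand hf hg _).integral_prod_right'
    _ ≤ ‖(1 / 4 : ℝ)‖ₑ *
          ∫⁻ v in Ioi 0, ∫⁻ u in Ioi 0, ∫⁻ x in Ioi 0, ‖phiKer x u v * f u * g v‖ₑ := by
        gcongr ‖(1 / 4 : ℝ)‖ₑ * ?_
        refine lintegral_mono fun v => lintegral_enorm_integral_le_lintegral_lintegral_enorm
          (k := fun x u => phiKer x u v * f u * g v) ?_
        exact ((Measurable.aestronglyMeasurable (by unfold phiKer; fun_prop)).mul
          hf.comp_snd).mul aestronglyMeasurable_const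
    _ ≤ ‖(1 / 4 : ℝ)‖ₑ *
          ∫⁻ v in Ioi 0, 8 * (∫⁻ u in Ioi 0, ‖f u‖ₑ) * (‖g v‖ₑ * ENNReal.ofReal (K0 v)) := by
        gcongr ‖(1 / 4 : ℝ)‖ₑ * ?_
        exact setLIntegral_mono' measurableSet_Ioi fun v hv =>
          setLIntegral_setLIntegral_enorm_phiKer_mul_mul_le hv
    _ = 2 * (∫⁻ u in Ioi 0, ‖f u‖ₑ) * ∫⁻ v in Ioi 0, ‖g v‖ₑ * ENNReal.ofReal (K0 v) := by
        rw [lintegral_const_mul'' _ (f := fun v => ‖g v‖ₑ * ENNReal.ofReal (K0 v))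
            (hg.enorm.mul measurable_K0.ennreal_ofReal.aemeasurable),
          hquarter, show (8 : ℝ≥0∞) = 4 * 2 by norm_num, mul_assoc, mul_assoc, mul_assoc,
          ← mul_assoc (4⁻¹ : ℝ≥0∞), ENNReal.inv_mul_cancel (by norm_num) (by norm_num), one_mul]

theorem setLIntegral_enorm_mul_K0_le {β : ℝ} {ξ : ℝ → ℝ} (hβ0 : 0 < β) (hβ1 : β ≤ 1)
    (hξ : IntegrableOn (fun v => |ξ v| * K0 (β * v)) (Ioi 0)) :
    ∫⁻ v in Ioi 0, ‖ξ v‖ₑ * ENNReal.ofReal (K0 v) ≤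
      ENNReal.ofReal (∫ v in Ioi 0, |ξ v| * K0 (β * v)) := by
  rw [ofReal_integral_eq_lintegral_ofReal hξ
    (ae_of_all _ fun v => mul_nonneg (abs_nonneg _) (K0_nonneg _))]
  refine setLIntegral_mono' measurableSet_Ioi fun v (hv : 0 < v) => ?_
  rw [Real.enorm_eq_ofReal_abs, ← ENNReal.ofReal_mul (abs_nonneg _)]
  exact ENNReal.ofReal_le_ofReal (mul_le_mul_of_nonneg_left
    (K0_antitoneOn (mul_pos hβ0 hv) hv (mul_le_of_le_one_left hv.le hβ1)) (abs_nonneg _))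

theorem setLIntegral_enorm_gconv_fscConv_le {β : ℝ} (hβ : β ∈ Ioo (0 : ℝ) 1) {Φ ξ : ℝ → ℝ}
    (hΦ : IntegrableOn Φ (Ioi 0)) (hξm : AEStronglyMeasurable ξ (volume.restrict (Ioi 0)))
    (hξ : IntegrableOn (fun v => |ξ v| * K0 (β * v)) (Ioi 0)) :
    ∫⁻ x in Ioi 0, ‖gconv (fscConv Φ (fun t => √(π / 2) * exp (-t))) ξ x‖ₑ ≤
      2 * ENNReal.ofReal (∫ x in Ioi 0, |Φ x|) *
        ENNReal.ofReal (∫ v in Ioi 0, |ξ v| * K0 (β * v)) := by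
  have hA : ENNReal.ofReal (∫ x in Ioi 0, |Φ x|) = ∫⁻ x in Ioi 0, ‖Φ x‖ₑ := by
    simpa only [Real.norm_eq_abs] using ofReal_integral_norm_eq_lintegral_enorm hΦ
  rw [hA]
  refine (setLIntegral_enorm_gconv_le (aestronglyMeasurable_fscConv_sqrt_pi_div_two_mul_exp_neg
    hΦ.aestronglyMeasurable _) hξm).trans ?_
  gcongr 2 * ?_ * ?_
  · exact setLIntegral_enorm_fscConv_sqrt_pi_div_two_mul_exp_neg_le hΦ.aestronglyMeasurable
  · exact setLIntegral_enorm_mul_K0_le hβ.1 hβ.2.le hξ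

theorem first_kind_solution_estimate (β : ℝ) (hβ : β ∈ Set.Ioo (0 : ℝ) 1) (Φ ξ : ℝ → ℝ)
    (hΦ : MeasureTheory.IntegrableOn Φ (Set.Ioi 0))
    (hξm : Measurable ξ)
    (hξ : MeasureTheory.IntegrableOn (fun v => |ξ v| * K0 (β * v)) (Set.Ioi 0)) :
    MeasureTheory.IntegrableOn
      (gconv (fscConv Φ (fun t => Real.sqrt (Real.pi / 2) * Real.exp (-t))) ξ)
      (Set.Ioi 0) ∧
    (∫ x in Set.Ioi (0 : ℝ),
        |gconv (fscConv Φ (fun t => Real.sqrt (Real.pi / 2) * Real.exp (-t))) ξ x|) ≤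
      4 * (∫ x in Set.Ioi (0 : ℝ), |Φ x|) * (∫ v in Set.Ioi (0 : ℝ), |ξ v| * K0 (β * v)) := by
  set f := gconv (fscConv Φ (fun t => √(π / 2) * exp (-t))) ξ
  set A := ∫ x in Ioi 0, |Φ x|
  set B := ∫ v in Ioi 0, |ξ v| * K0 (β * v)
  have hf : AEStronglyMeasurable f (volume.restrict (Ioi 0)) :=
    aestronglyMeasurable_gconv (aestronglyMeasurable_fscConv_sqrt_pi_div_two_mul_exp_neg
      hΦ.aestronglyMeasurable _) hξm.aestronglyMeasurable _
  have hbound := setLIntegral_enorm_gconv_fscConv_le hβ hΦ hξm.aestronglyMeasurable hξ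
  refine ⟨⟨hf, hbound.trans_lt (by finiteness)⟩, ?_⟩
  have hA0 : 0 ≤ A := setIntegral_nonneg measurableSet_Ioi fun _ _ => abs_nonneg _
  have hB0 : 0 ≤ B :=
    setIntegral_nonneg measurableSet_Ioi fun _ _ => mul_nonneg (abs_nonneg _) (K0_nonneg _)
  calc ∫ x in Ioi 0, |f x| = (∫⁻ x in Ioi 0, ‖f x‖ₑ).toReal := by
        simpa only [Real.norm_eq_abs] using integral_norm_eq_lintegral_enorm hf
    _ ≤ (2 * ENNReal.ofReal A * ENNReal.ofReal B).toReal :=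
        ENNReal.toReal_mono (by finiteness) hbound
    _ = 2 * A * B := by simp [ENNReal.toReal_ofReal, hA0, hB0]
    _ ≤ 4 * A * B := by gcongr; norm_num
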